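/- Let E be a real or complex Banach lattice and let x, y ∈ E with x ≥ 0 and y ≥ 0. Then the following assertions are equivalent: (i) x lies in the closure of the principal ideal E_y; (ii) ‖(y − sx)⁻‖ = o(s) as s ↓ 0. -/

import Mathlib

open Filter Topology Asymptotics

noncomputable section

/-- A complex Banach lattice, axiomatized via its order (given by the positive cone),
its modulus map `cabs` and its canonical conjugation `conj`. -/
class ComplexBanachLattice (E : Type*) extends
    NormedAddCommGroup E, NormedSpace ℂ E, CompleteSpace E, PartialOrder E where
  /-- the modulus map `z ↦ |z|` -/
  cabs : E → E
  /-- the canonical conjugation of the complex Banach lattice -/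
  conj : E → E
  add_le_add_left' : ∀ a b : E, a ≤ b → ∀ c : E, c + a ≤ c + b
  smul_nonneg' : ∀ (r : ℝ) (x : E), 0 ≤ r → 0 ≤ x → 0 ≤ (r : ℂ) • x
  isClosed_nonneg : IsClosed {x : E | 0 ≤ x}
  cabs_nonneg : ∀ x : E, 0 ≤ cabs x
  cabs_of_nonneg : ∀ x : E, 0 ≤ x → cabs x = x
  cabs_eq_zero_iff : ∀ x : E, cabs x = 0 ↔ x = 0
  cabs_smul : ∀ (c : ℂ) (x : E), cabs (c • x) = (‖c‖ : ℂ) • cabs x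
  cabs_add_le : ∀ x y : E, cabs (x + y) ≤ cabs x + cabs y
  norm_cabs : ∀ x : E, ‖cabs x‖ = ‖x‖
  norm_mono : ∀ x y : E, cabs x ≤ cabs y → ‖x‖ ≤ ‖y‖
  conj_add : ∀ x y : E, conj (x + y) = conj x + conj y
  conj_smul : ∀ (c : ℂ) (x : E), conj (c • x) = (starRingEnd ℂ c) • conj x
  conj_conj : ∀ x : E, conj (conj x) = x
  conj_of_nonneg : ∀ x : E, 0 ≤ x → conj x = x
  cabs_conj : ∀ x : E, cabs (conj x) = cabs x
  cabs_isLUB : ∀ x : E, conj x = x → IsLUB {x, -x} (cabs x)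
  exists_lub : ∀ x y : E, conj x = x → conj y = y → ∃ z : E, IsLUB {x, y} z

open ComplexBanachLattice

/-- A bounded linear operator on a complex Banach lattice is positive
if it maps positive elements to positive elements. -/
def IsPosOp {E : Type*} [ComplexBanachLattice E] (T : E →L[ℂ] E) : Prop :=
  ∀ x : E, 0 ≤ x → 0 ≤ T x

/-- The negative part `u⁻ = (|u| - u)/2` of a (real) element `u`. -/
def negPart {E : Type*} [ComplexBanachLattice E] (u : E) : E :=
  ((2⁻¹ : ℝ) : ℂ) • (cabs u - u)

/-! Since `(y - s x)⁻ = s (x - s⁻¹ y)⁺`, condition (ii) says that `‖(x - t y)⁺‖ → 0` as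
`t → ∞`. If so, `x - (x - t y)⁺` lies between `0` and `t y`, hence in `E_y`, and tends to `x`.
Conversely, if `|z| ≤ c y` then for `t ≥ c` we get `(x - t y)⁺ ≤ (x - |z|)⁺ ≤ |x - |z||`,
whose norm is at most `‖x - z‖`. -/

namespace ComplexBanachLattice

variable {E : Type*} [ComplexBanachLattice E]

instance : IsOrderedAddMonoid E where
  add_le_add_left a b h c := by simpa only [add_comm _ c] using add_le_add_left' a b h c

instance : PosSMulMono ℝ E :=
  .of_smul_nonneg fun r hr x hx => by simpa only [Complex.coe_smul] using smul_nonneg' r x hr hx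

instance : PosPart E := ⟨fun u => (2⁻¹ : ℝ) • (cabs u + u)⟩

theorem posPart_def (u : E) : u⁺ = (2⁻¹ : ℝ) • (cabs u + u) := rfl

def IsReal (u : E) : Prop := conj u = u

theorem IsReal.of_nonneg {u : E} (hu : 0 ≤ u) : IsReal u := conj_of_nonneg u hu

theorem IsReal.sub {u v : E} (hu : IsReal u) (hv : IsReal v) : IsReal (u - v) := by
  have hneg : conj (-v) = -conj v :=
    eq_neg_of_add_eq_zero_right <| by
      rw [← conj_add, add_neg_cancel, conj_of_nonneg 0 le_rfl]
  rw [IsReal, sub_eq_add_neg, conj_add, hneg, hu, hv]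

theorem IsReal.smul {u : E} (hu : IsReal u) (r : ℝ) : IsReal (r • u) := by
  rw [IsReal, ← Complex.coe_smul, conj_smul, Complex.conj_ofReal, hu]

theorem cabs_neg (u : E) : cabs (-u) = cabs u := by
  simpa using cabs_smul (-1) u

theorem cabs_real_smul (r : ℝ) (u : E) : cabs (r • u) = |r| • cabs u := by
  rw [← Complex.coe_smul, cabs_smul, Complex.norm_real, Real.norm_eq_abs, Complex.coe_smul]

theorem le_cabs {u : E} (hu : IsReal u) : u ≤ cabs u :=
  (cabs_isLUB u hu).1 (Set.mem_insert _ _)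

theorem neg_le_cabs {u : E} (hu : IsReal u) : -u ≤ cabs u :=
  (cabs_isLUB u hu).1 (Set.mem_insert_of_mem _ rfl)

theorem cabs_le {u v : E} (hu : IsReal u) (h₁ : u ≤ v) (h₂ : -u ≤ v) : cabs u ≤ v :=
  (cabs_isLUB u hu).2 <| by simp [upperBounds, h₁, h₂]

theorem cabs_sub_cabs_le (u v : E) : cabs (cabs u - cabs v) ≤ cabs (u - v) := by
  have triangle (a b : E) : cabs a - cabs b ≤ cabs (a - b) :=
    sub_le_iff_le_add.2 (by simpa using cabs_add_le (a - b) b)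
  refine cabs_le ((IsReal.of_nonneg (cabs_nonneg u)).sub (IsReal.of_nonneg (cabs_nonneg v)))
    (triangle u v) ?_
  rw [neg_sub, ← cabs_neg (u - v), neg_sub]
  exact triangle v u

theorem norm_le_norm_of_le_cabs {u v : E} (hu : 0 ≤ u) (h : u ≤ cabs v) : ‖u‖ ≤ ‖v‖ :=
  norm_mono u v (by rwa [cabs_of_nonneg u hu])

theorem norm_sub_cabs_le {u : E} (hu : 0 ≤ u) (v : E) : ‖u - cabs v‖ ≤ ‖u - v‖ := by
  simpa only [norm_cabs, cabs_of_nonneg u hu] using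
    norm_mono _ _ ((cabs_sub_cabs_le u v).trans_eq (cabs_of_nonneg _ (cabs_nonneg _)).symm)

theorem half_smul_add_self (u : E) : (2⁻¹ : ℝ) • (u + u) = u := by
  rw [← two_smul ℝ u, smul_smul, inv_mul_cancel₀ two_ne_zero, one_smul]

theorem le_posPart {u : E} (hu : IsReal u) : u ≤ u⁺ := by
  rw [posPart_def]
  conv_lhs => rw [← half_smul_add_self u]
  exact smul_le_smul_of_nonneg_left (add_le_add_left (le_cabs hu) u) (by norm_num)

theorem posPart_nonneg {u : E} (hu : IsReal u) : 0 ≤ u⁺ :=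
  smul_nonneg (by norm_num) (neg_le_iff_add_nonneg.1 (neg_le_cabs hu))

theorem posPart_le {u v : E} (hu : IsReal u) (h : u ≤ v) (hv : 0 ≤ v) : u⁺ ≤ v := by
  have hcabs : cabs u ≤ v + v - u := by
    refine cabs_le hu ?_ ?_
    · rw [le_sub_iff_add_le]
      exact add_le_add h h
    · simpa only [sub_eq_neg_add] using le_add_of_nonneg_right (add_nonneg hv hv)
  rw [posPart_def, ← half_smul_add_self v]
  exact smul_le_smul_of_nonneg_left (le_sub_iff_add_le.1 hcabs) (by norm_num)

theorem posPart_mono {u v : E} (hu : IsReal u) (hv : IsReal v) (h : u ≤ v) : u⁺ ≤ v⁺ :=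
  posPart_le hu (h.trans (le_posPart hv)) (posPart_nonneg hv)

theorem posPart_le_cabs {u : E} (hu : IsReal u) : u⁺ ≤ cabs u :=
  posPart_le hu (le_cabs hu) (cabs_nonneg u)

theorem posPart_smul {r : ℝ} (hr : 0 ≤ r) (u : E) : (r • u)⁺ = r • u⁺ := by
  rw [posPart_def, posPart_def, cabs_real_smul, abs_of_nonneg hr, ← smul_add, smul_comm]

theorem negPart_eq_posPart_neg (u : E) : negPart u = (-u)⁺ := by
  rw [_root_.negPart, posPart_def, cabs_neg, Complex.coe_smul, sub_eq_add_neg]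

theorem norm_negPart_sub_smul {s : ℝ} (hs : 0 < s) (x y : E) :
    ‖negPart (y - (s : ℂ) • x)‖ = s * ‖(x - s⁻¹ • y)⁺‖ := by
  have hscale : -(y - (s : ℂ) • x) = s • (x - s⁻¹ • y) := by
    rw [smul_sub, smul_inv_smul₀ hs.ne', Complex.coe_smul, neg_sub]
  rw [negPart_eq_posPart_neg, hscale, posPart_smul hs.le, norm_smul, Real.norm_of_nonneg hs.le]

theorem isLittleO_norm_negPart_iff (x y : E) :
    (fun s : ℝ => ‖negPart (y - (s : ℂ) • x)‖) =o[𝓝[>] 0] (fun s => s) ↔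
      Tendsto (fun t : ℝ => ‖(x - t • y)⁺‖) atTop (𝓝 0) := by
  have hpos : ∀ᶠ s : ℝ in 𝓝[>] 0, 0 < s := eventually_mem_nhdsWithin
  rw [isLittleO_iff_tendsto' (hpos.mono fun s hs h => absurd h hs.ne'), ← inv_nhdsGT_zero,
    ← Filter.map_inv, tendsto_map'_iff]
  refine tendsto_congr' (hpos.mono fun s hs => ?_)
  dsimp only [Function.comp_apply]
  rw [norm_negPart_sub_smul hs, mul_div_cancel_left₀ _ hs.ne']

theorem norm_posPart_sub_smul_le {x y z : E} (hx : 0 ≤ x) (hy : 0 ≤ y) {c t : ℝ}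
    (hz : cabs z ≤ (c : ℂ) • y) (hct : c ≤ t) : ‖(x - t • y)⁺‖ ≤ ‖x - z‖ := by
  have hu : IsReal (x - t • y) := (IsReal.of_nonneg hx).sub ((IsReal.of_nonneg hy).smul t)
  have hw : IsReal (x - cabs z) := (IsReal.of_nonneg hx).sub (IsReal.of_nonneg (cabs_nonneg z))
  have hzt : cabs z ≤ t • y :=
    hz.trans (by simpa only [Complex.coe_smul] using smul_le_smul_of_nonneg_right hct hy)
  have hle : (x - t • y)⁺ ≤ cabs (x - cabs z) :=
    (posPart_mono hu hw (sub_le_sub_left hzt x)).trans (posPart_le_cabs hw)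
  calc ‖(x - t • y)⁺‖ ≤ ‖x - cabs z‖ := norm_le_norm_of_le_cabs (posPart_nonneg hu) hle
    _ ≤ ‖x - z‖ := norm_sub_cabs_le hx z

def principalIdeal (y : E) : Set E := {z | ∃ c : ℝ, 0 < c ∧ cabs z ≤ (c : ℂ) • y}

theorem sub_posPart_sub_smul_mem_principalIdeal {x y : E} (hx : 0 ≤ x) (hy : 0 ≤ y) {t : ℝ}
    (ht : 0 < t) : x - (x - t • y)⁺ ∈ principalIdeal y := by
  have hu := (IsReal.of_nonneg hx).sub ((IsReal.of_nonneg hy).smul t)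
  have hle : (x - t • y)⁺ ≤ x :=
    posPart_le hu (sub_le_self x (smul_nonneg ht.le hy)) hx
  refine ⟨t, ht, ?_⟩
  rw [cabs_of_nonneg _ (sub_nonneg.2 hle), Complex.coe_smul, sub_le_comm]
  exact le_posPart hu

end ComplexBanachLattice

/-- Proposition 4.6: for `x, y ≥ 0` in a Banach lattice, `x` lies in the closure of the
principal ideal `E_y` if and only if `‖(y - sx)⁻‖ = o(s)` as `s ↓ 0`. -/
theorem closure_of_principal_ideal
    {E : Type*} [ComplexBanachLattice E] (x y : E) (hx : 0 ≤ x) (hy : 0 ≤ y) :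
    x ∈ closure {z : E | ∃ c : ℝ, 0 < c ∧ cabs z ≤ (c : ℂ) • y} ↔
    (fun s : ℝ => ‖negPart (y - (s : ℂ) • x)‖) =o[𝓝[>] (0 : ℝ)] (fun s : ℝ => s) := by
  change x ∈ closure (principalIdeal y) ↔ _
  rw [isLittleO_norm_negPart_iff]
  constructor
  · intro hcl
    rw [Metric.tendsto_nhds]
    intro ε hε
    obtain ⟨z, ⟨c, -, hz⟩, hxz⟩ := Metric.mem_closure_iff.1 hcl ε hε
    filter_upwards [eventually_ge_atTop c] with t hct
    rw [Real.dist_0_eq_abs, abs_norm]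
    exact (norm_posPart_sub_smul_le hx hy hz hct).trans_lt (by rwa [dist_eq_norm] at hxz)
  · intro hdecay
    refine mem_closure_of_tendsto ?_ ((eventually_gt_atTop 0).mono fun t ht =>
      sub_posPart_sub_smul_mem_principalIdeal hx hy ht)
    simpa using (tendsto_zero_iff_norm_tendsto_zero.2 hdecay).const_sub x
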